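/- arXiv:1707.01047 — 13 statements merged into one kernel-verified Lean document; each statement's English description precedes it below -/
import Mathlib

section
/- Let X be a nonempty set, let m ≥ 1, and let L_1, …, L_m : X → [0,1]. Let α ≥ 1 and T ≥ 1. Suppose x_1, …, x_T ∈ X and w_1, …, w_T ∈ Δ_m satisfy: (i) (approximate Bayesian oracle) for every t ∈ [T], Σ_{i=1}^m w_t[i]·L_i(x_t) ≤ α · inf_{x ∈ X} Σ_{i=1}^m w_t[i]·L_i(x); and (ii) (adversary regret bound) (1/T) Σ_{t=1}^T Σ_{i=1}^m w_t[i]·L_i(x_t) ≥ max_{i ∈ [m]} (1/T) Σ_{t=1}^T L_i(x_t) − √(2·log(m)/T). Then max_{i ∈ [m]} (1/T) Σ_{t=1}^T L_i(x_t) ≤ α·τ + √(2·log(m)/T), where τ = inf_{x ∈ X} max_{i ∈ [m]} L_i(x). -/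
open Finset

/-- Improper robust optimization via an α-approximate Bayesian
oracle and the exponential-weights regret bound: the uniform distribution over
the iterates `x_1, …, x_T` is α-approximately robust up to `√(2 log m / T)`. -/
theorem robust_optimization_from_bayesian_oracle
    {X : Type*} [Nonempty X] (m T : ℕ) (hm : 1 ≤ m) (hT : 1 ≤ T)
    (L : Fin m → X → ℝ)
    (hL0 : ∀ i x, 0 ≤ L i x) (hL1 : ∀ i x, L i x ≤ 1)
    (α : ℝ) (hα : 1 ≤ α)
    (x : Fin T → X) (w : Fin T → Fin m → ℝ)
    (hw0 : ∀ t i, 0 ≤ w t i) (hw1 : ∀ t, ∑ i, w t i = 1)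
    (horacle : ∀ t, ∑ i, w t i * L i (x t) ≤ α * ⨅ y : X, ∑ i, w t i * L i y)
    (hregret :
      (⨆ i : Fin m, (1 / (T : ℝ)) * ∑ t, L i (x t)) - Real.sqrt (2 * Real.log m / T)
        ≤ (1 / (T : ℝ)) * ∑ t, ∑ i, w t i * L i (x t)) :
    (⨆ i : Fin m, (1 / (T : ℝ)) * ∑ t, L i (x t))
      ≤ α * (⨅ y : X, ⨆ i : Fin m, L i y) + Real.sqrt (2 * Real.log m / T) := by
  have hmne : Nonempty (Fin m) := ⟨⟨0, hm⟩⟩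
  have hTpos : (0:ℝ) < T := by exact_mod_cast hT
  -- sup over Fin m is bounded above (finite range)
  have hbdd : ∀ y : X, BddAbove (Set.range fun i : Fin m => L i y) := fun y =>
    Set.Finite.bddAbove (Set.finite_range _)
  -- For each y, ∑ w t i * L i y ≤ ⨆ i, L i y
  have key : ∀ t y, ∑ i, w t i * L i y ≤ ⨆ i : Fin m, L i y := by
    intro t y
    calc ∑ i, w t i * L i y ≤ ∑ i, w t i * (⨆ j : Fin m, L j y) := by
          apply Finset.sum_le_sum
          intro i _
          exact mul_le_mul_of_nonneg_left (le_ciSup (hbdd y) i) (hw0 t i)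
      _ = ⨆ j : Fin m, L j y := by rw [← Finset.sum_mul, hw1 t, one_mul]
  -- each oracle value ≤ α * τ
  have step : ∀ t, ∑ i, w t i * L i (x t) ≤ α * ⨅ y : X, ⨆ i : Fin m, L i y := by
    intro t
    refine (horacle t).trans (mul_le_mul_of_nonneg_left ?_ (by linarith))
    apply ciInf_mono
    · refine ⟨0, ?_⟩
      rintro _ ⟨y, rfl⟩
      exact Finset.sum_nonneg fun i _ => mul_nonneg (hw0 t i) (hL0 i y)
    · exact fun y => key t y
  have havg : (1 / (T : ℝ)) * ∑ t, ∑ i, w t i * L i (x t)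
      ≤ α * ⨅ y : X, ⨆ i : Fin m, L i y := by
    have :  ∑ t : Fin T, ∑ i, w t i * L i (x t)
        ≤ ∑ t : Fin T, (α * ⨅ y : X, ⨆ i : Fin m, L i y) :=
      Finset.sum_le_sum fun t _ => step t
    rw [Finset.sum_const, Finset.card_univ, Fintype.card_fin, nsmul_eq_mul] at this
    calc (1 / (T : ℝ)) * ∑ t, ∑ i, w t i * L i (x t)
        ≤ (1 / (T : ℝ)) * ((T:ℝ) * (α * ⨅ y : X, ⨆ i : Fin m, L i y)) := by
          exact mul_le_mul_of_nonneg_left this (by positivity)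
      _ = α * ⨅ y : X, ⨆ i : Fin m, L i y := by field_simp
  linarith [hregret]
end

section
/- Let X be a nonempty convex subset of a real vector space, let m ≥ 1, and let L_1, …, L_m : X → [0,1] each be convex on X. Let α ≥ 1 and T ≥ 1. Suppose x_1, …, x_T ∈ X and w_1, …, w_T ∈ Δ_m satisfy: (i) for every t, Σ_{i=1}^m w_t[i]·L_i(x_t) ≤ α · inf_{x ∈ X} Σ_{i=1}^m w_t[i]·L_i(x); and (ii) (1/T) Σ_{t=1}^T Σ_{i=1}^m w_t[i]·L_i(x_t) ≥ max_{i ∈ [m]} (1/T) Σ_{t=1}^T L_i(x_t) − √(2·log(m)/T). Then the single point x* = (1/T) Σ_{t=1}^T x_t lies in X and satisfies max_{i ∈ [m]} L_i(x*) ≤ α·τ + √(2·log(m)/T), where τ = inf_{x ∈ X} max_{i ∈ [m]} L_i(x). -/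
open Finset

/-- When the solution space is convex and the losses are convex,
the average point `x* = (1/T) Σ_t x_t` is a single (proper) α-approximately robust
solution, up to `√(2 log m / T)`. -/
theorem proper_robust_optimization_convex
    {V : Type*} [AddCommGroup V] [Module ℝ V]
    (X : Set V) (hXne : X.Nonempty) (hXconv : Convex ℝ X)
    (m T : ℕ) (hm : 1 ≤ m) (hT : 1 ≤ T)
    (L : Fin m → V → ℝ)
    (hL0 : ∀ i, ∀ y ∈ X, 0 ≤ L i y) (hL1 : ∀ i, ∀ y ∈ X, L i y ≤ 1)
    (hLconv : ∀ i, ConvexOn ℝ X (L i))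
    (α : ℝ) (hα : 1 ≤ α)
    (x : Fin T → V) (hx : ∀ t, x t ∈ X)
    (w : Fin T → Fin m → ℝ)
    (hw0 : ∀ t i, 0 ≤ w t i) (hw1 : ∀ t, ∑ i, w t i = 1)
    (horacle : ∀ t, ∑ i, w t i * L i (x t) ≤ α * ⨅ y : X, ∑ i, w t i * L i y)
    (hregret :
      (⨆ i : Fin m, (1 / (T : ℝ)) * ∑ t, L i (x t)) - Real.sqrt (2 * Real.log m / T)
        ≤ (1 / (T : ℝ)) * ∑ t, ∑ i, w t i * L i (x t)) :
    (1 / (T : ℝ)) • (∑ t, x t) ∈ X ∧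
      (⨆ i : Fin m, L i ((1 / (T : ℝ)) • ∑ t, x t))
        ≤ α * (⨅ y : X, ⨆ i : Fin m, L i y) + Real.sqrt (2 * Real.log m / T) := by
  haveI : Nonempty X := hXne.to_subtype
  haveI : Nonempty (Fin m) := ⟨⟨0, hm⟩⟩
  have hTpos : (0:ℝ) < T := by exact_mod_cast hT
  have hsum1 : ∑ _t : Fin T, (1 / (T : ℝ)) = 1 := by
    simp [Finset.sum_const, Finset.card_univ]
    field_simp
  have hαpos : (0:ℝ) ≤ α := le_trans zero_le_one hα
  -- membership
  have hmem : (1 / (T : ℝ)) • (∑ t, x t) ∈ X := by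
    rw [Finset.smul_sum]
    exact hXconv.sum_mem (fun t _ => by positivity) hsum1 (fun t _ => hx t)
  refine ⟨hmem, ?_⟩
  -- Jensen
  have hjensen : ∀ i, L i ((1 / (T : ℝ)) • ∑ t, x t) ≤ (1 / (T : ℝ)) * ∑ t, L i (x t) := by
    intro i
    have := (hLconv i).map_sum_le (t := Finset.univ) (w := fun _ => (1 / (T : ℝ)))
      (p := x) (fun t _ => by positivity) hsum1 (fun t _ => hx t)
    calc L i ((1 / (T : ℝ)) • ∑ t, x t) = L i (∑ t, (1 / (T : ℝ)) • x t) := by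
          rw [Finset.smul_sum]
      _ ≤ ∑ t, (1 / (T : ℝ)) * L i (x t) := this
      _ = (1 / (T : ℝ)) * ∑ t, L i (x t) := by rw [Finset.mul_sum]
  -- pointwise: weighted sum ≤ sup
  have hweighted : ∀ (t : Fin T) (y : V), y ∈ X →
      ∑ i, w t i * L i y ≤ ⨆ i : Fin m, L i y := by
    intro t y hy
    calc ∑ i, w t i * L i y ≤ ∑ i, w t i * (⨆ j : Fin m, L j y) := by
          refine Finset.sum_le_sum fun i _ => ?_
          exact mul_le_mul_of_nonneg_left
            (le_ciSup (f := fun j : Fin m => L j y) (Set.Finite.bddAbove (Set.finite_range _)) i) (hw0 t i)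
      _ = ⨆ j : Fin m, L j y := by rw [← Finset.sum_mul, hw1 t, one_mul]
  -- inf of weighted ≤ τ
  have hinf : ∀ t : Fin T, (⨅ y : X, ∑ i, w t i * L i (y : V))
      ≤ ⨅ y : X, ⨆ i : Fin m, L i (y : V) := by
    intro t
    refine ciInf_mono ⟨0, ?_⟩ (fun y => hweighted t y y.2)
    rintro _ ⟨y, rfl⟩
    exact Finset.sum_nonneg fun i _ => mul_nonneg (hw0 t i) (hL0 i y y.2)
  set τ := ⨅ y : X, ⨆ i : Fin m, L i (y : V) with hτdef
  have hper : ∀ t, ∑ i, w t i * L i (x t) ≤ α * τ := fun t =>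
    (horacle t).trans (mul_le_mul_of_nonneg_left (hinf t) hαpos)
  have havg : (1 / (T : ℝ)) * ∑ t, ∑ i, w t i * L i (x t) ≤ α * τ := by
    have : ∑ t, ∑ i, w t i * L i (x t) ≤ ∑ _t : Fin T, α * τ :=
      Finset.sum_le_sum fun t _ => hper t
    rw [Finset.sum_const, Finset.card_univ, Fintype.card_fin, nsmul_eq_mul] at this
    calc (1 / (T : ℝ)) * ∑ t, ∑ i, w t i * L i (x t)
        ≤ (1 / (T : ℝ)) * ((T : ℝ) * (α * τ)) := by
          exact mul_le_mul_of_nonneg_left this (by positivity)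
      _ = α * τ := by field_simp
  have hsup1 : (⨆ i : Fin m, L i ((1 / (T : ℝ)) • ∑ t, x t))
      ≤ ⨆ i : Fin m, (1 / (T : ℝ)) * ∑ t, L i (x t) := by
    refine ciSup_le fun i => (hjensen i).trans ?_
    exact le_ciSup (f := fun j : Fin m => (1 / (T : ℝ)) * ∑ t, L j (x t)) (Set.Finite.bddAbove (Set.finite_range _)) i
  have hreg' : (⨆ i : Fin m, (1 / (T : ℝ)) * ∑ t, L i (x t))
      ≤ (1 / (T : ℝ)) * (∑ t, ∑ i, w t i * L i (x t)) + Real.sqrt (2 * Real.log m / T) := by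
    linarith [hregret]
  calc (⨆ i : Fin m, L i ((1 / (T : ℝ)) • ∑ t, x t))
      ≤ (1 / (T : ℝ)) * (∑ t, ∑ i, w t i * L i (x t)) + Real.sqrt (2 * Real.log m / T) :=
        hsup1.trans hreg'
    _ ≤ α * τ + Real.sqrt (2 * Real.log m / T) := by linarith [havg]
end

section
/- Let X be a nonempty set, let m ≥ 1, and let L_1, …, L_m : X → [0,1]. Let α ≥ 1, η > 0, and T ≥ 1. Suppose x_1, …, x_T ∈ X and w_1, …, w_T ∈ Δ_m satisfy: (i) for every t, Σ_{i=1}^m w_t[i]·L_i(x_t) ≤ α · inf_{x ∈ X} Σ_{i=1}^m w_t[i]·L_i(x); and (ii) (variance-sensitive regret bound) (1+η)·(1/T) Σ_{t=1}^T Σ_{i=1}^m w_t[i]·L_i(x_t) ≥ max_{i ∈ [m]} (1/T) Σ_{t=1}^T L_i(x_t) − log(m)/(η·T). Then max_{i ∈ [m]} (1/T) Σ_{t=1}^T L_i(x_t) ≤ α·(1+η)·τ + log(m)/(η·T), where τ = inf_{x ∈ X} max_{i ∈ [m]} L_i(x). -/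
open Finset

/-- Faster convergence: with a step size `η` and the
variance-sensitive regret bound of exponential weights, the uniform distribution
over the iterates is `α(1+η)`-approximately robust up to `log m / (η T)`. -/
theorem robust_optimization_faster_convergence
    {X : Type*} [Nonempty X] (m T : ℕ) (hm : 1 ≤ m) (hT : 1 ≤ T)
    (L : Fin m → X → ℝ)
    (hL0 : ∀ i x, 0 ≤ L i x) (hL1 : ∀ i x, L i x ≤ 1)
    (α η : ℝ) (hα : 1 ≤ α) (hη : 0 < η)
    (x : Fin T → X) (w : Fin T → Fin m → ℝ)
    (hw0 : ∀ t i, 0 ≤ w t i) (hw1 : ∀ t, ∑ i, w t i = 1)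
    (horacle : ∀ t, ∑ i, w t i * L i (x t) ≤ α * ⨅ y : X, ∑ i, w t i * L i y)
    (hregret :
      (⨆ i : Fin m, (1 / (T : ℝ)) * ∑ t, L i (x t)) - Real.log m / (η * T)
        ≤ (1 + η) * ((1 / (T : ℝ)) * ∑ t, ∑ i, w t i * L i (x t))) :
    (⨆ i : Fin m, (1 / (T : ℝ)) * ∑ t, L i (x t))
      ≤ α * (1 + η) * (⨅ y : X, ⨆ i : Fin m, L i y) + Real.log m / (η * T) := by
  have hmpos : 0 < m := hm
  haveI : Nonempty (Fin m) := ⟨⟨0, hmpos⟩⟩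
  have hTpos : (0 : ℝ) < T := by exact_mod_cast hT
  set τ : ℝ := ⨅ y : X, ⨆ i : Fin m, L i y with hτ
  -- each weighted inf is ≤ τ
  have hinf : ∀ t : Fin T, (⨅ y : X, ∑ i, w t i * L i y) ≤ τ := by
    intro t
    apply ciInf_mono
    · refine ⟨0, ?_⟩
      rintro _ ⟨y, rfl⟩
      exact Finset.sum_nonneg fun i _ => mul_nonneg (hw0 t i) (hL0 i y)
    · intro y
      calc ∑ i, w t i * L i y ≤ ∑ i, w t i * (⨆ j : Fin m, L j y) := by
            apply Finset.sum_le_sum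
            intro i _
            exact mul_le_mul_of_nonneg_left (le_ciSup (f := fun j : Fin m => L j y) (Set.finite_range _).bddAbove i) (hw0 t i)
        _ = ⨆ j : Fin m, L j y := by rw [← Finset.sum_mul, hw1 t, one_mul]
  have hstep : ∀ t : Fin T, ∑ i, w t i * L i (x t) ≤ α * τ := fun t =>
    (horacle t).trans (mul_le_mul_of_nonneg_left (hinf t) (by linarith))
  have hτ0 : 0 ≤ τ := le_ciInf fun y =>
    le_ciSup_of_le (Set.finite_range _).bddAbove ⟨0, hmpos⟩ (hL0 _ y)
  have havg : (1 / (T : ℝ)) * ∑ t, ∑ i, w t i * L i (x t) ≤ α * τ := by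
    have hsum : ∑ t, ∑ i, w t i * L i (x t) ≤ (T : ℝ) * (α * τ) := by
      calc ∑ t, ∑ i, w t i * L i (x t) ≤ ∑ _t : Fin T, α * τ :=
            Finset.sum_le_sum fun t _ => hstep t
        _ = (T : ℝ) * (α * τ) := by simp [mul_comm]
    rw [one_div, inv_mul_le_iff₀ hTpos]
    linarith [hsum]
  have h1η : (0 : ℝ) ≤ 1 + η := by linarith
  calc (⨆ i : Fin m, (1 / (T : ℝ)) * ∑ t, L i (x t))
      ≤ (1 + η) * ((1 / (T : ℝ)) * ∑ t, ∑ i, w t i * L i (x t)) + Real.log m / (η * T) := by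
        linarith [hregret]
    _ ≤ (1 + η) * (α * τ) + Real.log m / (η * T) := by
        linarith [mul_le_mul_of_nonneg_left havg h1η]
    _ = α * (1 + η) * τ + Real.log m / (η * T) := by ring
end

section
/- Let X be a nonempty set, let m ≥ 1, and let f_1, …, f_m : X → [0,1] (rewards). Let α ∈ (0,1], η ∈ (0,1), and T ≥ 1. Suppose x_1, …, x_T ∈ X and w_1, …, w_T ∈ Δ_m satisfy: (i) (approximate Bayesian oracle for rewards) for every t, Σ_{i=1}^m w_t[i]·f_i(x_t) ≥ α · sup_{x ∈ X} Σ_{i=1}^m w_t[i]·f_i(x); and (ii) (variance-sensitive regret bound) (1−η)·(1/T) Σ_{t=1}^T Σ_{i=1}^m w_t[i]·f_i(x_t) ≤ min_{i ∈ [m]} (1/T) Σ_{t=1}^T f_i(x_t) + log(m)/(η·T). Then min_{i ∈ [m]} (1/T) Σ_{t=1}^T f_i(x_t) ≥ α·(1−η)·τ − log(m)/(η·T), where τ = sup_{x ∈ X} min_{i ∈ [m]} f_i(x). -/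
open Finset

/-- Robust reward maximization: given an α-approximate Bayesian
oracle for rewards and the variance-sensitive regret bound of exponential weights,
the uniform distribution over the iterates is `α(1−η)`-approximately robust up to
`log m / (η T)`. -/
theorem robust_reward_maximization_faster_convergence
    {X : Type*} [Nonempty X] (m T : ℕ) (hm : 1 ≤ m) (hT : 1 ≤ T)
    (f : Fin m → X → ℝ)
    (hf0 : ∀ i x, 0 ≤ f i x) (hf1 : ∀ i x, f i x ≤ 1)
    (α η : ℝ) (hα0 : 0 < α) (hα1 : α ≤ 1) (hη0 : 0 < η) (hη1 : η < 1)
    (x : Fin T → X) (w : Fin T → Fin m → ℝ)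
    (hw0 : ∀ t i, 0 ≤ w t i) (hw1 : ∀ t, ∑ i, w t i = 1)
    (horacle : ∀ t, α * (⨆ y : X, ∑ i, w t i * f i y) ≤ ∑ i, w t i * f i (x t))
    (hregret :
      (1 - η) * ((1 / (T : ℝ)) * ∑ t, ∑ i, w t i * f i (x t))
        ≤ (⨅ i : Fin m, (1 / (T : ℝ)) * ∑ t, f i (x t)) + Real.log m / (η * T)) :
    α * (1 - η) * (⨆ y : X, ⨅ i : Fin m, f i y) - Real.log m / (η * T)
      ≤ ⨅ i : Fin m, (1 / (T : ℝ)) * ∑ t, f i (x t) := by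
  haveI : Nonempty (Fin m) := Fin.pos_iff_nonempty.mp hm
  haveI : Nonempty (Fin T) := Fin.pos_iff_nonempty.mp hT
  have hTpos : (0 : ℝ) < T := by exact_mod_cast hT
  set τ : ℝ := ⨆ y : X, ⨅ i : Fin m, f i y with hτ
  -- key: for each t, α * τ ≤ ∑ i, w t i * f i (x t)
  have key : ∀ t, α * τ ≤ ∑ i, w t i * f i (x t) := by
    intro t
    refine le_trans ?_ (horacle t)
    apply mul_le_mul_of_nonneg_left _ hα0.le
    apply ciSup_mono
    · refine ⟨1, ?_⟩
      rintro _ ⟨y, rfl⟩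
      calc ∑ i, w t i * f i y ≤ ∑ i, w t i * 1 :=
            Finset.sum_le_sum fun i _ =>
              mul_le_mul_of_nonneg_left (hf1 i y) (hw0 t i)
        _ = 1 := by simp [hw1 t]
    · intro y
      have hbd : BddBelow (Set.range fun i : Fin m => f i y) :=
        (Set.finite_range _).bddBelow
      calc (⨅ i : Fin m, f i y) = ∑ i, w t i * (⨅ j : Fin m, f j y) := by
            rw [← Finset.sum_mul, hw1 t, one_mul]
        _ ≤ ∑ i, w t i * f i y :=
            Finset.sum_le_sum fun i _ =>
              mul_le_mul_of_nonneg_left (ciInf_le hbd i) (hw0 t i)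
  have havg : α * τ ≤ (1 / (T : ℝ)) * ∑ t, ∑ i, w t i * f i (x t) := by
    have : (T : ℝ) * (α * τ) ≤ ∑ t, ∑ i, w t i * f i (x t) := by
      calc (T : ℝ) * (α * τ) = ∑ _t : Fin T, α * τ := by
            simp [Finset.sum_const, mul_comm]
        _ ≤ ∑ t, ∑ i, w t i * f i (x t) := Finset.sum_le_sum fun t _ => key t
    rw [one_div]
    exact (le_inv_mul_iff₀ hTpos).mpr this
  have hmain : (1 - η) * (α * τ) ≤
      (1 - η) * ((1 / (T : ℝ)) * ∑ t, ∑ i, w t i * f i (x t)) :=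
    mul_le_mul_of_nonneg_left havg (by linarith)
  have : α * (1 - η) * τ = (1 - η) * (α * τ) := by ring
  linarith [hregret]
end

section
/- Let X be a nonempty set, let n ≥ 1, let W be a nonempty subset of ℝ^n with D = sup_{w ∈ W} ‖w‖_2 < ∞, and let L : X × W → [0,1]. Let α ≥ 1 and T ≥ 1. Suppose x_1, …, x_T ∈ X and w_1, …, w_T ∈ W satisfy: (i) (approximate Bayesian oracle) for every t, L(x_t, w_t) ≤ α · inf_{x ∈ X} L(x, w_t); and (ii) (adversary regret bound) (1/T) Σ_{t=1}^T L(x_t, w_t) ≥ sup_{w ∈ W} (1/T) Σ_{t=1}^T L(x_t, w) − D·√(2/T). Then sup_{w ∈ W} (1/T) Σ_{t=1}^T L(x_t, w) ≤ α·τ + D·√(2/T), where τ = inf_{x ∈ X} sup_{w ∈ W} L(x, w). -/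
open Finset

/-- Improper robust optimization with an infinite parameterized
family of losses `{L(·,w) : w ∈ W}`, `W ⊆ ℝⁿ` bounded with diameter bound
`D = sup_{w∈W} ‖w‖₂`: given the α-approximate Bayesian oracle guarantee and the
projected-gradient regret bound for the adversary, the uniform distribution over
the iterates is α-approximately robust up to `D √(2/T)`. -/
theorem robust_optimization_infinite_losses
    {X : Type*} [Nonempty X] (n T : ℕ) (hn : 1 ≤ n) (hT : 1 ≤ T)
    (W : Set (EuclideanSpace ℝ (Fin n))) (hWne : W.Nonempty)
    (D : ℝ) (hbdd : BddAbove (Set.range fun w : W => ‖(w : EuclideanSpace ℝ (Fin n))‖))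
    (hD : D = ⨆ w : W, ‖(w : EuclideanSpace ℝ (Fin n))‖)
    (L : X → EuclideanSpace ℝ (Fin n) → ℝ)
    (hL0 : ∀ x, ∀ w ∈ W, 0 ≤ L x w) (hL1 : ∀ x, ∀ w ∈ W, L x w ≤ 1)
    (α : ℝ) (hα : 1 ≤ α)
    (x : Fin T → X) (w : Fin T → EuclideanSpace ℝ (Fin n)) (hw : ∀ t, w t ∈ W)
    (horacle : ∀ t, L (x t) (w t) ≤ α * ⨅ y : X, L y (w t))
    (hregret :
      (⨆ v : W, (1 / (T : ℝ)) * ∑ t, L (x t) v) - D * Real.sqrt (2 / T)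
        ≤ (1 / (T : ℝ)) * ∑ t, L (x t) (w t)) :
    (⨆ v : W, (1 / (T : ℝ)) * ∑ t, L (x t) v)
      ≤ α * (⨅ y : X, ⨆ v : W, L y v) + D * Real.sqrt (2 / T) := by
  haveI : Nonempty W := hWne.to_subtype
  have hT0 : (0:ℝ) < T := by exact_mod_cast hT
  have hα0 : (0:ℝ) ≤ α := le_trans zero_le_one hα
  -- for each t, ⨅ y, L y (w t) ≤ τ
  have hinf : ∀ t : Fin T, (⨅ y : X, L y (w t)) ≤ ⨅ y : X, ⨆ v : W, L y v := by
    intro t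
    apply ciInf_mono
    · exact ⟨0, fun r ⟨y, hy⟩ => hy ▸ hL0 y (w t) (hw t)⟩
    · intro y
      have hb : BddAbove (Set.range fun v : W => L y v) :=
        ⟨1, fun r ⟨v, hv⟩ => hv ▸ hL1 y v v.2⟩
      exact le_ciSup hb ⟨w t, hw t⟩
  have hkey : (1 / (T : ℝ)) * ∑ t, L (x t) (w t)
      ≤ α * (⨅ y : X, ⨆ v : W, L y v) := by
    have hsum : ∑ t, L (x t) (w t) ≤ T * (α * (⨅ y : X, ⨆ v : W, L y v)) := by
      calc ∑ t, L (x t) (w t)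
          ≤ ∑ _t : Fin T, α * (⨅ y : X, ⨆ v : W, L y v) := by
            apply Finset.sum_le_sum
            intro t _
            exact (horacle t).trans (mul_le_mul_of_nonneg_left (hinf t) hα0)
        _ = T * (α * (⨅ y : X, ⨆ v : W, L y v)) := by
            simp [mul_comm]
    calc (1 / (T : ℝ)) * ∑ t, L (x t) (w t)
        ≤ (1 / (T : ℝ)) * (T * (α * (⨅ y : X, ⨆ v : W, L y v))) := by
          exact mul_le_mul_of_nonneg_left hsum (by positivity)
      _ = α * (⨅ y : X, ⨆ v : W, L y v) := by
          field_simp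
  linarith [hregret]
end

section
/- Let X be a nonempty convex subset of a real vector space, let n ≥ 1, let W be a nonempty subset of ℝ^n with D = sup_{w ∈ W} ‖w‖_2 < ∞, and let L : X × W → [0,1] be such that for every w ∈ W the map x ↦ L(x, w) is convex on X. Let α ≥ 1 and T ≥ 1. Suppose x_1, …, x_T ∈ X and w_1, …, w_T ∈ W satisfy: (i) for every t, L(x_t, w_t) ≤ α · inf_{x ∈ X} L(x, w_t); and (ii) (1/T) Σ_{t=1}^T L(x_t, w_t) ≥ sup_{w ∈ W} (1/T) Σ_{t=1}^T L(x_t, w) − D·√(2/T). Then the single point x* = (1/T) Σ_{t=1}^T x_t lies in X and satisfies sup_{w ∈ W} L(x*, w) ≤ α·τ + D·√(2/T), where τ = inf_{x ∈ X} sup_{w ∈ W} L(x, w). -/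
open Finset

/-- Infinite loss sets with a convex solution space and losses
convex in the solution: the average point `x* = (1/T) Σ_t x_t` lies in `X` and is
a single α-approximately robust solution, up to `D √(2/T)`. -/
theorem proper_robust_optimization_infinite_losses_convex
    {V : Type*} [AddCommGroup V] [Module ℝ V]
    (X : Set V) (hXne : X.Nonempty) (hXconv : Convex ℝ X)
    (n T : ℕ) (hn : 1 ≤ n) (hT : 1 ≤ T)
    (W : Set (EuclideanSpace ℝ (Fin n))) (hWne : W.Nonempty)
    (D : ℝ) (hbdd : BddAbove (Set.range fun w : W => ‖(w : EuclideanSpace ℝ (Fin n))‖))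
    (hD : D = ⨆ w : W, ‖(w : EuclideanSpace ℝ (Fin n))‖)
    (L : V → EuclideanSpace ℝ (Fin n) → ℝ)
    (hL0 : ∀ y ∈ X, ∀ v ∈ W, 0 ≤ L y v) (hL1 : ∀ y ∈ X, ∀ v ∈ W, L y v ≤ 1)
    (hLconv : ∀ v ∈ W, ConvexOn ℝ X fun y => L y v)
    (α : ℝ) (hα : 1 ≤ α)
    (x : Fin T → V) (hx : ∀ t, x t ∈ X)
    (w : Fin T → EuclideanSpace ℝ (Fin n)) (hw : ∀ t, w t ∈ W)
    (horacle : ∀ t, L (x t) (w t) ≤ α * ⨅ y : X, L y (w t))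
    (hregret :
      (⨆ v : W, (1 / (T : ℝ)) * ∑ t, L (x t) v) - D * Real.sqrt (2 / T)
        ≤ (1 / (T : ℝ)) * ∑ t, L (x t) (w t)) :
    (1 / (T : ℝ)) • (∑ t, x t) ∈ X ∧
      (⨆ v : W, L ((1 / (T : ℝ)) • ∑ t, x t) v)
        ≤ α * (⨅ y : X, ⨆ v : W, L y v) + D * Real.sqrt (2 / T) := by
  haveI : Nonempty X := hXne.to_subtype
  haveI : Nonempty W := hWne.to_subtype
  have hTpos : (0:ℝ) < T := by exact_mod_cast hT
  have hwt : ∀ t ∈ Finset.univ (α := Fin T), (0:ℝ) ≤ 1/T := fun _ _ => by positivity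
  have hwsum : ∑ _t : Fin T, (1/(T:ℝ)) = 1 := by
    simp [Finset.sum_const, Finset.card_univ]
    field_simp
  have hmem : ∀ t ∈ Finset.univ (α := Fin T), x t ∈ X := fun t _ => hx t
  have hxstar : (1/(T:ℝ)) • (∑ t, x t) ∈ X := by
    rw [Finset.smul_sum]
    exact hXconv.sum_mem hwt hwsum hmem
  refine ⟨hxstar, ?_⟩
  -- τ
  set τ : ℝ := ⨅ y : X, ⨆ v : W, L y v with hτdef
  set c : ℝ := D * Real.sqrt (2 / T) with hcdef
  -- Jensen
  have jensen : ∀ v : W, L ((1/(T:ℝ)) • ∑ t, x t) (v : EuclideanSpace ℝ (Fin n))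
      ≤ (1/(T:ℝ)) * ∑ t, L (x t) (v : EuclideanSpace ℝ (Fin n)) := by
    intro v
    have h := (hLconv v v.2).map_sum_le hwt hwsum hmem
    rw [← Finset.smul_sum] at h
    calc L ((1/(T:ℝ)) • ∑ t, x t) (v:EuclideanSpace ℝ (Fin n))
        ≤ ∑ t, (1/(T:ℝ)) • L (x t) (v:EuclideanSpace ℝ (Fin n)) := h
      _ = (1/(T:ℝ)) * ∑ t, L (x t) (v:EuclideanSpace ℝ (Fin n)) := by
          rw [Finset.mul_sum]; simp [smul_eq_mul]
  have hbddg : BddAbove (Set.range fun v : W =>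
      (1/(T:ℝ)) * ∑ t, L (x t) (v : EuclideanSpace ℝ (Fin n))) := by
    refine ⟨1, ?_⟩
    rintro r ⟨v, rfl⟩
    have hsum : ∑ t, L (x t) (v : EuclideanSpace ℝ (Fin n)) ≤ ∑ _t : Fin T, (1:ℝ) :=
      Finset.sum_le_sum fun t _ => hL1 _ (hx t) _ v.2
    simp only at hsum ⊢
    calc (1/(T:ℝ)) * ∑ t, L (x t) (v:EuclideanSpace ℝ (Fin n))
        ≤ (1/(T:ℝ)) * (T:ℝ) := by
          apply mul_le_mul_of_nonneg_left _ (by positivity)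
          simpa using hsum
      _ = 1 := by field_simp
  have step1 : (⨆ v : W, L ((1/(T:ℝ)) • ∑ t, x t) (v : EuclideanSpace ℝ (Fin n)))
      ≤ ⨆ v : W, (1/(T:ℝ)) * ∑ t, L (x t) (v : EuclideanSpace ℝ (Fin n)) :=
    ciSup_mono hbddg jensen
  have step2 : (⨆ v : W, (1/(T:ℝ)) * ∑ t, L (x t) (v : EuclideanSpace ℝ (Fin n)))
      ≤ (1/(T:ℝ)) * ∑ t, L (x t) (w t) + c := by
    have := hregret
    linarith
  -- each oracle term ≤ α τ
  have hterm : ∀ t : Fin T, L (x t) (w t) ≤ α * τ := by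
    intro t
    refine (horacle t).trans (mul_le_mul_of_nonneg_left ?_ (by linarith))
    refine le_ciInf fun y => ?_
    have h1 : (⨅ y : X, L y (w t)) ≤ L (y : V) (w t) :=
      ciInf_le ⟨0, by rintro r ⟨z, rfl⟩; exact hL0 _ z.2 _ (hw t)⟩ y
    have h2 : L (y : V) (w t) ≤ ⨆ v : W, L (y : V) (v : EuclideanSpace ℝ (Fin n)) :=
      le_ciSup (f := fun v : W => L (y:V) (v:EuclideanSpace ℝ (Fin n)))
        ⟨1, by rintro r ⟨v, rfl⟩; exact hL1 _ y.2 _ v.2⟩ ⟨w t, hw t⟩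
    exact h1.trans h2
  have step3 : (1/(T:ℝ)) * ∑ t, L (x t) (w t) ≤ α * τ := by
    have hsum : ∑ t, L (x t) (w t) ≤ ∑ _t : Fin T, α * τ :=
      Finset.sum_le_sum fun t _ => hterm t
    have : (1/(T:ℝ)) * ∑ t, L (x t) (w t) ≤ (1/(T:ℝ)) * ((T:ℝ) * (α * τ)) := by
      apply mul_le_mul_of_nonneg_left _ (by positivity)
      simpa [Finset.sum_const, Finset.card_univ] using hsum
    calc (1/(T:ℝ)) * ∑ t, L (x t) (w t) ≤ (1/(T:ℝ)) * ((T:ℝ) * (α * τ)) := this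
      _ = α * τ := by field_simp
  calc (⨆ v : W, L ((1/(T:ℝ)) • ∑ t, x t) (v : EuclideanSpace ℝ (Fin n)))
      ≤ (1/(T:ℝ)) * ∑ t, L (x t) (w t) + c := step1.trans step2
    _ ≤ α * τ + c := by linarith
end

section
/- Let V be a real vector space, let H be a nonempty subset of V, let m ≥ 1, and let L_1, …, L_m : V → [0,1] be convex functionals (each L_i is convex on V). Let α ≥ 1 and T ≥ 1. Suppose h_1, …, h_T ∈ H and w_1, …, w_T ∈ Δ_m satisfy: (i) for every t, Σ_{i=1}^m w_t[i]·L_i(h_t) ≤ α · inf_{h ∈ H} Σ_{i=1}^m w_t[i]·L_i(h); and (ii) (1/T) Σ_{t=1}^T Σ_{i=1}^m w_t[i]·L_i(h_t) ≥ max_{i ∈ [m]} (1/T) Σ_{t=1}^T L_i(h_t) − √(2·log(m)/T). Then the ensemble hypothesis h* = (1/T) Σ_{t=1}^T h_t satisfies max_{i ∈ [m]} L_i(h*) ≤ α · inf_{h ∈ H} max_{i ∈ [m]} L_i(h) + √(2·log(m)/T). -/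
open Finset

/-- Robust statistical learning: if the loss functionals are
convex over the vector space of hypotheses, the ensemble hypothesis
`h* = (1/T) Σ_t h_t` built from the oracle's outputs is α-approximately robust
with respect to the hypothesis class `H`, up to `√(2 log m / T)`. -/
theorem robust_statistical_learning_ensemble
    {V : Type*} [AddCommGroup V] [Module ℝ V]
    (H : Set V) (hHne : H.Nonempty)
    (m T : ℕ) (hm : 1 ≤ m) (hT : 1 ≤ T)
    (L : Fin m → V → ℝ)
    (hL0 : ∀ i h, 0 ≤ L i h) (hL1 : ∀ i h, L i h ≤ 1)
    (hLconv : ∀ i, ConvexOn ℝ Set.univ (L i))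
    (α : ℝ) (hα : 1 ≤ α)
    (h : Fin T → V) (hh : ∀ t, h t ∈ H)
    (w : Fin T → Fin m → ℝ)
    (hw0 : ∀ t i, 0 ≤ w t i) (hw1 : ∀ t, ∑ i, w t i = 1)
    (horacle : ∀ t, ∑ i, w t i * L i (h t) ≤ α * ⨅ g : H, ∑ i, w t i * L i g)
    (hregret :
      (⨆ i : Fin m, (1 / (T : ℝ)) * ∑ t, L i (h t)) - Real.sqrt (2 * Real.log m / T)
        ≤ (1 / (T : ℝ)) * ∑ t, ∑ i, w t i * L i (h t)) :
    (⨆ i : Fin m, L i ((1 / (T : ℝ)) • ∑ t, h t))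
      ≤ α * (⨅ g : H, ⨆ i : Fin m, L i g) + Real.sqrt (2 * Real.log m / T) := by
  haveI : Nonempty (Fin m) := ⟨⟨0, hm⟩⟩
  haveI : Nonempty H := hHne.to_subtype
  have hTpos : (0 : ℝ) < T := by exact_mod_cast hT
  have hα0 : (0 : ℝ) ≤ α := le_trans zero_le_one hα
  -- step 1: Jensen
  have jensen : ∀ i, L i ((1 / (T : ℝ)) • ∑ t, h t) ≤ (1 / (T : ℝ)) * ∑ t, L i (h t) := by
    intro i
    have h1 : ((1 : ℝ) / T) • ∑ t, h t = ∑ t : Fin T, (1 / (T : ℝ)) • h t := by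
      rw [Finset.smul_sum]
    have := (hLconv i).map_sum_le (t := Finset.univ) (w := fun _ : Fin T => 1 / (T : ℝ))
      (p := h) (fun _ _ => by positivity)
      (by simp [Finset.sum_const, Finset.card_univ]; field_simp)
      (fun _ _ => Set.mem_univ _)
    rw [h1]
    simpa [Finset.mul_sum] using this
  -- sup over i
  have hsup : (⨆ i : Fin m, L i ((1 / (T : ℝ)) • ∑ t, h t))
      ≤ ⨆ i : Fin m, (1 / (T : ℝ)) * ∑ t, L i (h t) := by
    apply ciSup_mono (Set.Finite.bddAbove (Set.finite_range _)) jensen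
  -- step 2: oracle bound, averaged
  have key : (1 / (T : ℝ)) * ∑ t, ∑ i, w t i * L i (h t)
      ≤ α * ⨅ g : H, ⨆ i : Fin m, L i g := by
    have step : ∀ t, ∑ i, w t i * L i (h t) ≤ α * ⨅ g : H, ⨆ i : Fin m, L i g := by
      intro t
      refine (horacle t).trans (mul_le_mul_of_nonneg_left ?_ hα0)
      apply ciInf_mono
      · refine ⟨0, ?_⟩
        rintro x ⟨g, rfl⟩
        exact Finset.sum_nonneg fun i _ => mul_nonneg (hw0 t i) (hL0 i g)
      · intro g
        calc ∑ i, w t i * L i g ≤ ∑ i, w t i * ⨆ j : Fin m, L j g := by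
              apply Finset.sum_le_sum
              intro i _
              exact mul_le_mul_of_nonneg_left
                (le_ciSup (f := fun j : Fin m => L j (g : V)) (Set.Finite.bddAbove (Set.finite_range _)) i) (hw0 t i)
          _ = ⨆ j : Fin m, L j g := by rw [← Finset.sum_mul, hw1 t, one_mul]
    calc (1 / (T : ℝ)) * ∑ t, ∑ i, w t i * L i (h t)
        ≤ (1 / (T : ℝ)) * ∑ _t : Fin T, (α * ⨅ g : H, ⨆ i : Fin m, L i g) := by
          apply mul_le_mul_of_nonneg_left (Finset.sum_le_sum fun t _ => step t)
          positivity
      _ = α * ⨅ g : H, ⨆ i : Fin m, L i g := by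
          rw [Finset.sum_const, Finset.card_univ, Fintype.card_fin, nsmul_eq_mul]
          field_simp
  linarith [hregret, hsup]
end

section
/- Let X be a nonempty set, let m ≥ 1, and let L_1, …, L_m : X → [0,1]. Let α ≥ 1 and T ≥ 1. Suppose x_1, …, x_T ∈ X and w_1, …, w_T ∈ Δ_m satisfy: (i) for every t, Σ_{i=1}^m w_t[i]·L_i(x_t) ≤ α · inf_{x ∈ X} Σ_{i=1}^m w_t[i]·L_i(x); and (ii) (1/T) Σ_{t=1}^T Σ_{i=1}^m w_t[i]·L_i(x_t) ≥ max_{i ∈ [m]} (1/T) Σ_{t=1}^T L_i(x_t) − √(2·log(m)/T). Then max_{i ∈ [m]} (1/T) Σ_{t=1}^T L_i(x_t) ≤ α·τ* + √(2·log(m)/T), where τ* = inf_G max_{i ∈ [m]} E_{x∼G}[L_i(x)] and the infimum is over all finitely supported probability distributions G on X. -/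
open Finset

/-- Strengthened benchmark: the guarantee of the reduction holds
against the randomized minimax benchmark
`τ* = inf_G max_i E_{x∼G}[L_i(x)]`, where `G` ranges over finitely supported
probability distributions on `X`. -/
theorem robust_optimization_strengthened_benchmark
    {X : Type*} [Nonempty X] (m T : ℕ) (hm : 1 ≤ m) (hT : 1 ≤ T)
    (L : Fin m → X → ℝ)
    (hL0 : ∀ i x, 0 ≤ L i x) (hL1 : ∀ i x, L i x ≤ 1)
    (α : ℝ) (hα : 1 ≤ α)
    (x : Fin T → X) (w : Fin T → Fin m → ℝ)
    (hw0 : ∀ t i, 0 ≤ w t i) (hw1 : ∀ t, ∑ i, w t i = 1)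
    (horacle : ∀ t, ∑ i, w t i * L i (x t) ≤ α * ⨅ y : X, ∑ i, w t i * L i y)
    (hregret :
      (⨆ i : Fin m, (1 / (T : ℝ)) * ∑ t, L i (x t)) - Real.sqrt (2 * Real.log m / T)
        ≤ (1 / (T : ℝ)) * ∑ t, ∑ i, w t i * L i (x t)) :
    (⨆ i : Fin m, (1 / (T : ℝ)) * ∑ t, L i (x t))
      ≤ α * (⨅ G : {G : X →₀ ℝ // (∀ y, 0 ≤ G y) ∧ (G.sum fun _ p => p) = 1},
              ⨆ i : Fin m, (G : X →₀ ℝ).sum fun y p => p * L i y)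
        + Real.sqrt (2 * Real.log m / T) := by
  classical
  haveI : Nonempty (Fin m) := ⟨⟨0, hm⟩⟩
  have hT0 : (0:ℝ) < T := by exact_mod_cast hT
  obtain ⟨y₀⟩ := ‹Nonempty X›
  haveI hne : Nonempty {G : X →₀ ℝ // (∀ y, 0 ≤ G y) ∧ (G.sum fun _ p => p) = 1} := by
    refine ⟨⟨Finsupp.single y₀ 1, ?_, ?_⟩⟩
    · intro y
      rw [Finsupp.single_apply]
      split <;> norm_num
    · simp [Finsupp.sum_single_index]
  have hα0 : (0:ℝ) ≤ α := le_trans zero_le_one hα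
  have hBB : ∀ t, BddBelow (Set.range fun y : X => ∑ i, w t i * L i y) := by
    intro t
    refine ⟨0, ?_⟩
    rintro _ ⟨y, rfl⟩
    exact Finset.sum_nonneg fun i _ => mul_nonneg (hw0 t i) (hL0 i y)
  set τ := ⨅ G : {G : X →₀ ℝ // (∀ y, 0 ≤ G y) ∧ (G.sum fun _ p => p) = 1},
      ⨆ i : Fin m, (G : X →₀ ℝ).sum fun y p => p * L i y with hτ
  have key : ∀ t, (⨅ y : X, ∑ i, w t i * L i y) ≤ τ := by
    intro t
    refine le_ciInf fun G => ?_
    obtain ⟨G, hG0, hG1⟩ := G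
    have step1 : (⨅ y : X, ∑ i, w t i * L i y)
        ≤ ∑ i, w t i * (G.sum fun y p => p * L i y) := by
      have hswap : ∑ i, w t i * (G.sum fun y p => p * L i y)
          = ∑ y ∈ G.support, G y * ∑ i, w t i * L i y := by
        simp only [Finsupp.sum, Finset.mul_sum]
        rw [Finset.sum_comm]
        congr 1; ext y; congr 1; ext i; ring
      rw [hswap]
      have : (⨅ y : X, ∑ i, w t i * L i y)
          = ∑ y ∈ G.support, G y * (⨅ y : X, ∑ i, w t i * L i y) := by
        rw [← Finset.sum_mul]
        have : ∑ y ∈ G.support, G y = 1 := hG1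
        rw [this, one_mul]
      rw [this]
      refine Finset.sum_le_sum fun y _ => ?_
      exact mul_le_mul_of_nonneg_left (ciInf_le (hBB t) y) (hG0 y)
    have step2 : ∑ i, w t i * (G.sum fun y p => p * L i y)
        ≤ ⨆ i : Fin m, G.sum fun y p => p * L i y := by
      calc ∑ i, w t i * (G.sum fun y p => p * L i y)
          ≤ ∑ i, w t i * (⨆ i : Fin m, G.sum fun y p => p * L i y) := by
            refine Finset.sum_le_sum fun i _ => ?_
            exact mul_le_mul_of_nonneg_left
              (le_ciSup (f := fun i : Fin m => G.sum fun y p => p * L i y)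
                (Set.Finite.bddAbove (Set.finite_range _)) i) (hw0 t i)
        _ = ⨆ i : Fin m, G.sum fun y p => p * L i y := by
            rw [← Finset.sum_mul, hw1 t, one_mul]
    exact step1.trans step2
  have main : (1 / (T : ℝ)) * ∑ t, ∑ i, w t i * L i (x t) ≤ α * τ := by
    have h1 : ∑ t, ∑ i, w t i * L i (x t) ≤ ∑ _t : Fin T, α * τ := by
      refine Finset.sum_le_sum fun t _ => ?_
      exact (horacle t).trans (mul_le_mul_of_nonneg_left (key t) hα0)
    rw [Finset.sum_const, Finset.card_univ, Fintype.card_fin, nsmul_eq_mul] at h1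
    calc (1 / (T : ℝ)) * ∑ t, ∑ i, w t i * L i (x t)
        ≤ (1 / (T : ℝ)) * ((T : ℝ) * (α * τ)) := by
          exact mul_le_mul_of_nonneg_left h1 (by positivity)
      _ = α * τ := by field_simp
  linarith [hregret]
end

section
/- Let N be a finite ground set, let k ≥ 1, let m ≥ 1, and let f_1, …, f_m be monotone submodular functions from subsets of N to [0,1] (i.e., f_i(S) ≤ f_i(T) whenever S ⊆ T, and f_i(S∪T) + f_i(S∩T) ≤ f_i(S) + f_i(T) for all S, T ⊆ N). Let η ∈ (0,1) and T ≥ 1. Suppose S_1, …, S_T ⊆ N with |S_t| ≤ k and w_1, …, w_T ∈ Δ_m satisfy: (i) (greedy oracle guarantee) for every t, Σ_{i=1}^m w_t[i]·f_i(S_t) ≥ (1 − 1/e) · max_{S ⊆ N, |S| ≤ k} Σ_{i=1}^m w_t[i]·f_i(S); and (ii) (1−η)·(1/T) Σ_{t=1}^T Σ_{i=1}^m w_t[i]·f_i(S_t) ≤ min_{i ∈ [m]} (1/T) Σ_{t=1}^T f_i(S_t) + log(m)/(η·T). Then min_{i ∈ [m]} (1/T) Σ_{t=1}^T f_i(S_t)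 ≥ (1 − 1/e)·(1−η)·τ − log(m)/(η·T), where τ = max_{S ⊆ N, |S| ≤ k} min_{i ∈ [m]} f_i(S). -/
open Finset

/-- Robust submodular maximization via the greedy
`(1−1/e)`-approximate Bayesian oracle: the uniform distribution over the sets
`S_1, …, S_T` achieves worst-case value at least
`(1−1/e)(1−η) τ − log m / (η T)`. -/
theorem robust_submodular_maximization
    {N : Type*} [Fintype N] [DecidableEq N]
    (k m T : ℕ) (hk : 1 ≤ k) (hm : 1 ≤ m) (hT : 1 ≤ T)
    (f : Fin m → Finset N → ℝ)
    (hf0 : ∀ i S, 0 ≤ f i S) (hf1 : ∀ i S, f i S ≤ 1)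
    (hmono : ∀ i, ∀ S S' : Finset N, S ⊆ S' → f i S ≤ f i S')
    (hsubmod : ∀ i, ∀ S S' : Finset N, f i (S ∪ S') + f i (S ∩ S') ≤ f i S + f i S')
    (η : ℝ) (hη0 : 0 < η) (hη1 : η < 1)
    (S : Fin T → Finset N) (hScard : ∀ t, (S t).card ≤ k)
    (w : Fin T → Fin m → ℝ)
    (hw0 : ∀ t i, 0 ≤ w t i) (hw1 : ∀ t, ∑ i, w t i = 1)
    (horacle : ∀ t,
      (1 - (Real.exp 1)⁻¹) * (⨆ A : {A : Finset N // A.card ≤ k}, ∑ i, w t i * f i A)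
        ≤ ∑ i, w t i * f i (S t))
    (hregret :
      (1 - η) * ((1 / (T : ℝ)) * ∑ t, ∑ i, w t i * f i (S t))
        ≤ (⨅ i : Fin m, (1 / (T : ℝ)) * ∑ t, f i (S t)) + Real.log m / (η * T)) :
    (1 - (Real.exp 1)⁻¹) * (1 - η)
        * (⨆ A : {A : Finset N // A.card ≤ k}, ⨅ i : Fin m, f i A)
      - Real.log m / (η * T)
      ≤ ⨅ i : Fin m, (1 / (T : ℝ)) * ∑ t, f i (S t) := by
  haveI : Nonempty (Fin m) := ⟨⟨0, hm⟩⟩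
  haveI hAne : Nonempty {A : Finset N // A.card ≤ k} :=
    ⟨⟨∅, by simp⟩⟩
  have hc : (0:ℝ) ≤ 1 - (Real.exp 1)⁻¹ := by
    have h1 : (1:ℝ) ≤ Real.exp 1 := by
      have := Real.add_one_le_exp (1:ℝ); linarith
    have : (Real.exp 1)⁻¹ ≤ 1 := by
      rw [inv_le_one_iff₀]; right; exact h1
    linarith
  have hηc : (0:ℝ) ≤ 1 - η := by linarith
  have hTpos : (0:ℝ) < (T:ℝ) := by exact_mod_cast hT
  -- for each t and each A, ⨅ i, f i A ≤ ∑ i, w t i * f i A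
  have hsupmono : ∀ t : Fin T,
      (⨆ A : {A : Finset N // A.card ≤ k}, ⨅ i : Fin m, f i A)
        ≤ ⨆ A : {A : Finset N // A.card ≤ k}, ∑ i, w t i * f i A := by
    intro t
    refine ciSup_mono (Finite.bddAbove_range _) ?_
    intro A
    calc ⨅ i : Fin m, f i A = (⨅ i : Fin m, f i A) * ∑ i, w t i := by
          rw [hw1 t, mul_one]
      _ = ∑ i, (⨅ j : Fin m, f j A) * w t i := by rw [Finset.mul_sum]
      _ ≤ ∑ i, w t i * f i A := by
          refine Finset.sum_le_sum fun i _ => ?_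
          rw [mul_comm]
          exact mul_le_mul_of_nonneg_left
            (ciInf_le (Finite.bddBelow_range _) i) (hw0 t i)
  set τ := ⨆ A : {A : Finset N // A.card ≤ k}, ⨅ i : Fin m, f i A with hτ
  have hτavg : (1 - (Real.exp 1)⁻¹) * τ
      ≤ (1 / (T : ℝ)) * ∑ t, ∑ i, w t i * f i (S t) := by
    have h1 : ∀ t : Fin T, (1 - (Real.exp 1)⁻¹) * τ ≤ ∑ i, w t i * f i (S t) := by
      intro t
      exact le_trans (mul_le_mul_of_nonneg_left (hsupmono t) hc) (horacle t)
    have h2 : (T:ℝ) * ((1 - (Real.exp 1)⁻¹) * τ) ≤ ∑ t, ∑ i, w t i * f i (S t) := by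
      calc (T:ℝ) * ((1 - (Real.exp 1)⁻¹) * τ)
          = ∑ _t : Fin T, (1 - (Real.exp 1)⁻¹) * τ := by
            simp [Finset.sum_const, Finset.card_univ]
        _ ≤ _ := Finset.sum_le_sum fun t _ => h1 t
    have := mul_le_mul_of_nonneg_left h2 (le_of_lt (one_div_pos.mpr hTpos))
    calc (1 - (Real.exp 1)⁻¹) * τ
        = (1 / (T:ℝ)) * ((T:ℝ) * ((1 - (Real.exp 1)⁻¹) * τ)) := by
          field_simp
      _ ≤ _ := this
  have := mul_le_mul_of_nonneg_left hτavg hηc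
  calc (1 - (Real.exp 1)⁻¹) * (1 - η) * τ - Real.log m / (η * T)
      = (1 - η) * ((1 - (Real.exp 1)⁻¹) * τ) - Real.log m / (η * T) := by ring
    _ ≤ (1 - η) * ((1 / (T : ℝ)) * ∑ t, ∑ i, w t i * f i (S t))
        - Real.log m / (η * T) := by linarith
    _ ≤ ⨅ i : Fin m, (1 / (T : ℝ)) * ∑ t, f i (S t) := by linarith
end

section
/- Let m, k, d ≥ 1, let U = {u_1, …, u_m} and let T_1, …, T_d ⊆ U. Define the ground set N = {a_{ij} : i ∈ [m], j ∈ [k]} ∪ {b_r : r ∈ [d]} (with all these elements distinct) and, for each i ∈ [m], the linear loss ℓ_i(S) = Σ_{e ∈ S} c_i(e) for S ⊆ N, where c_i(a_{ij}) = 1/k for all j, c_i(a_{i'j}) = 0 for i' ≠ i, c_i(b_r) = 2/m if u_i ∈ T_r, and c_i(b_r) = 1/(k·m) if u_i ∉ T_r. If there exist indices r_1, …, r_k ∈ [d] such that the sets T_{r_1}, …, T_{r_k} are pairwise disjoint, then the set S = {b_{r_1}, …, b_{r_k}} satisfies |S| = k and ℓ_i(S) ≤ 2/m + (k−1)/(k·m)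 < 3/m for every i ∈ [m]. -/
open Finset

/-- The ground set of the set-packing reduction: elements `a_{ij}` (left) for
`i ∈ [m]`, `j ∈ [k]`, and elements `b_r` (right) for `r ∈ [d]`. -/
abbrev PackingElem (m k d : ℕ) := (Fin m × Fin k) ⊕ Fin d

/-- The per-element loss coefficients `c_i` of the set-packing reduction:
`c_i(a_{ij}) = 1/k`, `c_i(a_{i'j}) = 0` for `i' ≠ i`, `c_i(b_r) = 2/m` if
`u_i ∈ T_r` and `1/(km)` otherwise. -/
noncomputable def lossCoeff (m k d : ℕ) (Ts : Fin d → Finset (Fin m)) (i : Fin m) :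
    PackingElem m k d → ℝ
  | Sum.inl (i', _) => if i' = i then 1 / (k : ℝ) else 0
  | Sum.inr r => if i ∈ Ts r then 2 / (m : ℝ) else 1 / ((k : ℝ) * m)

/-- The linear loss `ℓ_i(S) = Σ_{e ∈ S} c_i(e)` of the set-packing reduction. -/
noncomputable def linLoss (m k d : ℕ) (Ts : Fin d → Finset (Fin m)) (i : Fin m)
    (S : Finset (PackingElem m k d)) : ℝ :=
  ∑ e ∈ S, lossCoeff m k d Ts i e

/-- Completeness of the set-packing reduction: if there are `k`
(distinct) pairwise disjoint sets `T_{r_1}, …, T_{r_k}`, then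
`S = {b_{r_1}, …, b_{r_k}}` has size `k` and loss `ℓ_i(S) ≤ 2/m + (k−1)/(km) < 3/m`
for every `i`. -/
theorem set_packing_reduction_completeness
    (m k d : ℕ) (hm : 1 ≤ m) (hk : 1 ≤ k) (hd : 1 ≤ d)
    (Ts : Fin d → Finset (Fin m))
    (r : Fin k → Fin d) (hinj : Function.Injective r)
    (hdisj : ∀ j j' : Fin k, j ≠ j' → Disjoint (Ts (r j)) (Ts (r j'))) :
    (Finset.univ.image fun j : Fin k => (Sum.inr (r j) : PackingElem m k d)).card = k ∧
    (∀ i : Fin m,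
      linLoss m k d Ts i
          (Finset.univ.image fun j : Fin k => (Sum.inr (r j) : PackingElem m k d))
        ≤ 2 / (m : ℝ) + ((k : ℝ) - 1) / ((k : ℝ) * m)) ∧
    2 / (m : ℝ) + ((k : ℝ) - 1) / ((k : ℝ) * m) < 3 / (m : ℝ) := by
  have hm' : (0:ℝ) < m := by exact_mod_cast hm
  have hk' : (0:ℝ) < k := by exact_mod_cast hk
  have hinj' : Function.Injective fun j : Fin k => (Sum.inr (r j) : PackingElem m k d) := by
    intro a b h
    exact hinj (Sum.inr.inj h)
  refine ⟨?_, ?_, ?_⟩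
  · rw [Finset.card_image_of_injective _ hinj', Finset.card_univ, Fintype.card_fin]
  · intro i
    unfold linLoss
    rw [Finset.sum_image (fun a _ b _ h => hinj' h)]
    have hterm : ∀ j : Fin k, lossCoeff m k d Ts i (Sum.inr (r j))
        = 1 / ((k:ℝ)*m) + (if i ∈ Ts (r j) then 2/(m:ℝ) - 1/((k:ℝ)*m) else 0) := by
      intro j
      simp only [lossCoeff]
      split <;> ring
    simp only [hterm]
    rw [Finset.sum_add_distrib, Finset.sum_const, Finset.card_univ, Fintype.card_fin,
      Finset.sum_ite, Finset.sum_const_zero, add_zero, Finset.sum_const]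
    have hc : ((Finset.univ.filter fun j : Fin k => i ∈ Ts (r j)).card : ℝ) ≤ 1 := by
      have : (Finset.univ.filter fun j : Fin k => i ∈ Ts (r j)).card ≤ 1 := by
        apply Finset.card_le_one.2
        intro a ha b hb
        simp only [Finset.mem_filter] at ha hb
        by_contra hne
        exact Finset.disjoint_left.1 (hdisj a b hne) ha.2 hb.2
      exact_mod_cast this
    have hpos : (0:ℝ) ≤ 2/(m:ℝ) - 1/((k:ℝ)*m) := by
      have hk1 : (1:ℝ) ≤ (k:ℝ) := by exact_mod_cast hk
      rw [sub_nonneg, div_le_div_iff₀ (by positivity) hm']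
      nlinarith
    have : ((Finset.univ.filter fun j : Fin k => i ∈ Ts (r j)).card : ℝ) • (2/(m:ℝ) - 1/((k:ℝ)*m)) ≤ 2/(m:ℝ) - 1/((k:ℝ)*m) := by
      rw [smul_eq_mul]
      nlinarith
    simp only [smul_eq_mul, nsmul_eq_mul] at this ⊢
    have hkm : (k:ℝ) * (1/((k:ℝ)*m)) = 1/m := by field_simp
    rw [hkm]
    have hrhs : 2/(m:ℝ) + ((k:ℝ)-1)/((k:ℝ)*m) = 1/m + (2/(m:ℝ) - 1/((k:ℝ)*m)) := by
      field_simp; ring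
    rw [hrhs]
    linarith
  · rw [div_add_div _ _ (by positivity) (by positivity)]
    rw [div_lt_div_iff₀ (by positivity) hm']
    nlinarith
end

section
/- Let m, k, d ≥ 1 with k < m/4, let U = {u_1, …, u_m} and let T_1, …, T_d ⊆ U. Define the ground set N = {a_{ij} : i ∈ [m], j ∈ [k]} ∪ {b_r : r ∈ [d]} (with all these elements distinct) and, for each i ∈ [m], the linear loss ℓ_i(S) = Σ_{e ∈ S} c_i(e) for S ⊆ N, where c_i(a_{ij}) = 1/k for all j, c_i(a_{i'j}) = 0 for i' ≠ i, c_i(b_r) = 2/m if u_i ∈ T_r, and c_i(b_r) = 1/(k·m) if u_i ∉ T_r. If no k of the sets T_1, …, T_d are pairwise disjoint (i.e., there is no set R ⊆ [d] with |R| = k such that T_r ∩ T_s = ∅ for all distinct r, s ∈ R), then every S ⊆ N with |S| = k satisfies max_{i ∈ [m]} ℓ_i(S) ≥ 4/m. -/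
open Finset

lemma lossCoeff_nonneg (m k d : ℕ) (Ts : Fin d → Finset (Fin m)) (i : Fin m)
    (e : PackingElem m k d) : 0 ≤ lossCoeff m k d Ts i e := by
  rcases e with ⟨i', j⟩ | r
  · simp only [lossCoeff]
    split <;> positivity
  · simp only [lossCoeff]
    split <;> positivity

/-- Soundness of the set-packing reduction: if `k < m/4` and no
`k` of the sets `T_1, …, T_d` are pairwise disjoint, then every size-`k` subset
`S` of the ground set has worst-case loss `max_i ℓ_i(S) ≥ 4/m`. -/
theorem set_packing_reduction_soundness
    (m k d : ℕ) (hm : 1 ≤ m) (hk : 1 ≤ k) (hd : 1 ≤ d) (hkm : 4 * k < m)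
    (Ts : Fin d → Finset (Fin m))
    (hnopack : ¬ ∃ R : Finset (Fin d), R.card = k ∧
      ∀ r ∈ R, ∀ s ∈ R, r ≠ s → Disjoint (Ts r) (Ts s)) :
    ∀ S : Finset (PackingElem m k d), S.card = k →
      4 / (m : ℝ) ≤ ⨆ i : Fin m, linLoss m k d Ts i S := by
  intro S hS
  have hm0 : (0:ℝ) < m := by exact_mod_cast hm
  have hk0 : (0:ℝ) < k := by exact_mod_cast hk
  have key : ∃ i : Fin m, 4 / (m : ℝ) ≤ linLoss m k d Ts i S := by
    by_cases hA : ∃ i j, Sum.inl (i, j) ∈ S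
    · obtain ⟨i, j, hij⟩ := hA
      refine ⟨i, ?_⟩
      have h1 : lossCoeff m k d Ts i (Sum.inl (i, j)) = 1 / (k : ℝ) := by
        simp [lossCoeff]
      have h2 : lossCoeff m k d Ts i (Sum.inl (i, j)) ≤ linLoss m k d Ts i S :=
        Finset.single_le_sum (fun e _ => lossCoeff_nonneg m k d Ts i e) hij
      have h3 : 4 / (m : ℝ) ≤ 1 / (k : ℝ) := by
        rw [div_le_div_iff₀ hm0 hk0]
        have : (4:ℝ) * k < m := by exact_mod_cast hkm
        linarith
      linarith [h2, h1 ▸ h2]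
    · push_neg at hA
      -- every element of S is of the form inr r
      have hinr : ∀ e ∈ S, ∃ r : Fin d, e = Sum.inr r := by
        intro e he
        rcases e with ⟨i, j⟩ | r
        · exact absurd he (hA i j)
        · exact ⟨r, rfl⟩
      set f : PackingElem m k d → Fin d :=
        fun e => Sum.elim (fun _ => ⟨0, hd⟩) id e with hf
      set R : Finset (Fin d) := S.image f with hR
      have hcard : R.card = k := by
        rw [hR, Finset.card_image_of_injOn, hS]
        intro x hx y hy hxy
        obtain ⟨rx, rfl⟩ := hinr x hx
        obtain ⟨ry, rfl⟩ := hinr y hy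
        simpa [hf] using hxy
      have hmem : ∀ r ∈ R, Sum.inr r ∈ S := by
        intro r hr
        rw [hR, Finset.mem_image] at hr
        obtain ⟨e, he, rfl⟩ := hr
        obtain ⟨r', rfl⟩ := hinr e he
        simpa [hf] using he
      push_neg at hnopack
      obtain ⟨r, hr, s, hs, hrs, hnd⟩ := hnopack R hcard
      rw [Finset.not_disjoint_iff] at hnd
      obtain ⟨i, hir, his⟩ := hnd
      refine ⟨i, ?_⟩
      have hsub : ({Sum.inr r, Sum.inr s} : Finset (PackingElem m k d)) ⊆ S := by
        intro e he
        simp only [Finset.mem_insert, Finset.mem_singleton] at he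
        rcases he with rfl | rfl
        exacts [hmem r hr, hmem s hs]
      have hne : (Sum.inr r : PackingElem m k d) ≠ Sum.inr s := by
        simpa using hrs
      have hsum : ∑ e ∈ ({Sum.inr r, Sum.inr s} : Finset (PackingElem m k d)),
          lossCoeff m k d Ts i e = 4 / (m : ℝ) := by
        rw [Finset.sum_pair hne]
        simp only [lossCoeff, if_pos hir, if_pos his]
        ring
      calc 4 / (m : ℝ) = _ := hsum.symm
        _ ≤ linLoss m k d Ts i S :=
          Finset.sum_le_sum_of_subset_of_nonneg hsub
            (fun e _ _ => lossCoeff_nonneg m k d Ts i e)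
  obtain ⟨i, hi⟩ := key
  exact hi.trans (le_ciSup (f := fun i => linLoss m k d Ts i S) (Set.Finite.bddAbove (Set.finite_range _)) i)
end

section
/- Let m, k, d ≥ 1, let U = {u_1, …, u_m} and let T_1, …, T_d ⊆ U. Define the ground set N = {a_{ij} : i ∈ [m], j ∈ [k]} ∪ {b_r : r ∈ [d]} and, for each i ∈ [m], the linear loss ℓ_i(S) = Σ_{e ∈ S} c_i(e) for S ⊆ N, where c_i(a_{ij}) = 1/k for all j, c_i(a_{i'j}) = 0 for i' ≠ i, c_i(b_r) = 2/m if u_i ∈ T_r, and c_i(b_r) = 1/(k·m) if u_i ∉ T_r. Let w ∈ Δ_m and let i* ∈ [m] satisfy w_{i*} = min_{i ∈ [m]} w_i. Then the set S* = {a_{i*,1}, …, a_{i*,k}} satisfies Σ_{i=1}^m w_i·ℓ_i(S*) = w_{i*} and Σ_{i=1}^m w_i·ℓ_i(S*) ≤ Σ_{i=1}^m w_i·ℓ_i(S) for every S ⊆ N with |S| = k; that is, S* is an exactly optimal Bayesian solution for the distribution w over the losses ℓ_1, …, ℓ_m. -/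
open Finset

/-!
The expected loss is linear, so it is the sum over `S` of the expected coefficients
`∑ i, w i * c_i(e)`. Each of these is at least `w_{i*} / k`: for `a_{i'j}` it is `w_{i'} / k`, and
for `b_r` it is at least `1 / (k m) ≥ w_{i*} / k`, since the minimum weight is at most `1 / m`.
So a `k`-set costs at least `w_{i*}`, which the `k` elements `a_{i*j}` cost exactly.
-/

lemma le_one_div_card_of_forall_le {ι : Type*} [Fintype ι] {w : ι → ℝ} (hw1 : ∑ i, w i = 1)
    {istar : ι} (hstar : ∀ i, w istar ≤ w i) : w istar ≤ 1 / Fintype.card ι := by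
  have hcard : (0 : ℝ) < Fintype.card ι := by
    exact_mod_cast Fintype.card_pos_iff.mpr ⟨istar⟩
  rw [le_div_iff₀ hcard, mul_comm, ← nsmul_eq_mul, ← hw1]
  exact card_nsmul_le_sum _ _ _ fun i _ => hstar i

namespace PackingElem

variable {m k d : ℕ} (Ts : Fin d → Finset (Fin m)) (w : Fin m → ℝ)

noncomputable def expectedCoeff (e : PackingElem m k d) : ℝ :=
  ∑ i, w i * lossCoeff m k d Ts i e

lemma sum_mul_linLoss (S : Finset (PackingElem m k d)) :
    ∑ i, w i * linLoss m k d Ts i S = ∑ e ∈ S, expectedCoeff Ts w e := by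
  simp only [linLoss, expectedCoeff, mul_sum]
  exact sum_comm

lemma expectedCoeff_inl (i' : Fin m) (j : Fin k) :
    expectedCoeff Ts w (Sum.inl (i', j)) = w i' / k := by
  rw [expectedCoeff, sum_eq_single i']
  · simp [lossCoeff, div_eq_mul_inv]
  · intro i _ hi
    simp [lossCoeff, Ne.symm hi]
  · simp

lemma one_div_mul_le_lossCoeff_inr (hk : 1 ≤ k) (i : Fin m) (r : Fin d) :
    1 / ((k : ℝ) * m) ≤ lossCoeff m k d Ts i (Sum.inr r) := by
  have hm : (0 : ℝ) < m := by exact_mod_cast i.pos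
  have hk' : (1 : ℝ) ≤ k := by exact_mod_cast hk
  simp only [lossCoeff]
  split_ifs
  · rw [div_le_div_iff₀ (by positivity) hm]
    nlinarith
  · rfl

lemma sum_div_le_expectedCoeff_inr (hk : 1 ≤ k) (hw0 : ∀ i, 0 ≤ w i) (r : Fin d) :
    (∑ i, w i) / (k * m) ≤ expectedCoeff Ts w (Sum.inr r : PackingElem m k d) := by
  rw [sum_div, expectedCoeff]
  refine sum_le_sum fun i _ => ?_
  rw [div_eq_mul_one_div]
  exact mul_le_mul_of_nonneg_left (one_div_mul_le_lossCoeff_inr Ts hk i r) (hw0 i)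

lemma div_le_expectedCoeff (hk : 1 ≤ k) (hw0 : ∀ i, 0 ≤ w i) (hw1 : ∑ i, w i = 1)
    {istar : Fin m} (hstar : ∀ i, w istar ≤ w i) (e : PackingElem m k d) :
    w istar / k ≤ expectedCoeff Ts w e := by
  rcases e with ⟨i', j⟩ | r
  · rw [expectedCoeff_inl]
    exact div_le_div_of_nonneg_right (hstar i') k.cast_nonneg
  · have hmin := le_one_div_card_of_forall_le hw1 hstar
    rw [Fintype.card_fin] at hmin
    calc w istar / k ≤ 1 / m / k := div_le_div_of_nonneg_right hmin k.cast_nonneg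
      _ = (∑ i, w i) / (k * m) := by rw [hw1, div_div, mul_comm]
      _ ≤ expectedCoeff Ts w (Sum.inr r) := sum_div_le_expectedCoeff_inr Ts w hk hw0 r

lemma sum_expectedCoeff_image_inl (hk : 1 ≤ k) (istar : Fin m) :
    ∑ e ∈ univ.image (fun j : Fin k => (Sum.inl (istar, j) : PackingElem m k d)),
      expectedCoeff Ts w e = w istar := by
  have hk' : (k : ℝ) ≠ 0 := by positivity
  rw [sum_image fun _ _ _ _ h => by simpa using h]
  simp only [expectedCoeff_inl, sum_const, card_univ, Fintype.card_fin, nsmul_eq_mul]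
  field_simp

end PackingElem

open PackingElem in
theorem set_packing_reduction_bayesian_oracle_general
    (m k d : ℕ) (hk : 1 ≤ k)
    (Ts : Fin d → Finset (Fin m))
    (w : Fin m → ℝ) (hw0 : ∀ i, 0 ≤ w i) (hw1 : ∑ i, w i = 1)
    (istar : Fin m) (hstar : ∀ i, w istar ≤ w i) :
    (∑ i, w i * linLoss m k d Ts i
        (Finset.univ.image fun j : Fin k => (Sum.inl (istar, j) : PackingElem m k d)))
      = w istar ∧
    ∀ S : Finset (PackingElem m k d), S.card = k →
      (∑ i, w i * linLoss m k d Ts i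
          (Finset.univ.image fun j : Fin k => (Sum.inl (istar, j) : PackingElem m k d)))
        ≤ ∑ i, w i * linLoss m k d Ts i S := by
  rw [sum_mul_linLoss, sum_expectedCoeff_image_inl Ts w hk istar]
  refine ⟨rfl, fun S hS => ?_⟩
  have hk' : (k : ℝ) ≠ 0 := by positivity
  calc w istar = S.card • (w istar / k) := by rw [hS, nsmul_eq_mul]; field_simp
    _ ≤ ∑ e ∈ S, expectedCoeff Ts w e :=
        card_nsmul_le_sum _ _ _ fun e _ => div_le_expectedCoeff Ts w hk hw0 hw1 hstar e
    _ = ∑ i, w i * linLoss m k d Ts i S := (sum_mul_linLoss Ts w S).symm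

/-- The optimal Bayesian oracle for the set-packing hardness
instance: for any distribution `w` over the losses and any minimum-weight index
`i*`, the set `S* = {a_{i*,1}, …, a_{i*,k}}` has expected loss exactly `w_{i*}`
and is exactly optimal among all size-`k` sets. -/
theorem set_packing_reduction_bayesian_oracle
    (m k d : ℕ) (hm : 1 ≤ m) (hk : 1 ≤ k) (hd : 1 ≤ d)
    (Ts : Fin d → Finset (Fin m))
    (w : Fin m → ℝ) (hw0 : ∀ i, 0 ≤ w i) (hw1 : ∑ i, w i = 1)
    (istar : Fin m) (hstar : ∀ i, w istar ≤ w i) :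
    (∑ i, w i * linLoss m k d Ts i
        (Finset.univ.image fun j : Fin k => (Sum.inl (istar, j) : PackingElem m k d)))
      = w istar ∧
    ∀ S : Finset (PackingElem m k d), S.card = k →
      (∑ i, w i * linLoss m k d Ts i
          (Finset.univ.image fun j : Fin k => (Sum.inl (istar, j) : PackingElem m k d)))
        ≤ ∑ i, w i * linLoss m k d Ts i S :=
  set_packing_reduction_bayesian_oracle_general m k d hk Ts w hw0 hw1 istar hstar
end

section
/- Let m, k, d ≥ 1, let U = {u_1, …, u_m} and let T_1, …, T_d ⊆ U. Define the ground set N = {a_{ij} : i ∈ [m], j ∈ [k]} ∪ {b_r : r ∈ [d]} and, for each i ∈ [m], the linear reward f_i(S) = Σ_{e ∈ S} v_i(e) for S ⊆ N, where v_i(a_{ij}) = 1/k for all j, v_i(a_{i'j}) = 0 for i' ≠ i, v_i(b_r) = 1/(k·m) if u_i ∈ T_r, and v_i(b_r) = 0 if u_i ∉ T_r. If there exists R ⊆ [d] with |R| ≤ k such that ⋃_{r ∈ R} T_r = U (a set cover of size at most k), then the set S = {b_r : r ∈ R} satisfies |S| ≤ k and f_i(S) ≥ 1/(k·m) for every i ∈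 [m]; consequently the minimax value τ = max_{S' ⊆ N, |S'| ≤ k} min_{i ∈ [m]} f_i(S') is at least 1/(k·m). -/
open Finset

/-- The ground set of the set-cover reduction: elements `a_{ij}` (left) for
`i ∈ [m]`, `j ∈ [k]`, and elements `b_r` (right) for `r ∈ [d]`. -/
abbrev CoverElem (m k d : ℕ) := (Fin m × Fin k) ⊕ Fin d

/-- The per-element reward coefficients `v_i` of the set-cover reduction:
`v_i(a_{ij}) = 1/k`, `v_i(a_{i'j}) = 0` for `i' ≠ i`, `v_i(b_r) = 1/(km)` if
`u_i ∈ T_r` and `0` otherwise. -/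
noncomputable def rewardCoeff (m k d : ℕ) (Ts : Fin d → Finset (Fin m)) (i : Fin m) :
    CoverElem m k d → ℝ
  | Sum.inl (i', _) => if i' = i then 1 / (k : ℝ) else 0
  | Sum.inr r => if i ∈ Ts r then 1 / ((k : ℝ) * m) else 0

/-- The linear reward `f_i(S) = Σ_{e ∈ S} v_i(e)` of the set-cover reduction. -/
noncomputable def linReward (m k d : ℕ) (Ts : Fin d → Finset (Fin m)) (i : Fin m)
    (S : Finset (CoverElem m k d)) : ℝ :=
  ∑ e ∈ S, rewardCoeff m k d Ts i e

lemma rewardCoeff_nonneg (m k d : ℕ) (Ts : Fin d → Finset (Fin m)) (i : Fin m)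
    (e : CoverElem m k d) : 0 ≤ rewardCoeff m k d Ts i e := by
  rcases e with ⟨i', j⟩ | r <;> simp [rewardCoeff] <;> split <;> positivity

/-- Completeness of the set-cover reduction: if there is a set
cover `R` of size at most `k`, then `S = {b_r : r ∈ R}` has size at most `k` and
reward `f_i(S) ≥ 1/(km)` for every `i`; consequently the minimax value
`τ = max_{|S'| ≤ k} min_i f_i(S')` is at least `1/(km)`. -/
theorem set_cover_reduction_completeness
    (m k d : ℕ) (hm : 1 ≤ m) (hk : 1 ≤ k) (hd : 1 ≤ d)
    (Ts : Fin d → Finset (Fin m))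
    (R : Finset (Fin d)) (hRcard : R.card ≤ k)
    (hcover : ∀ u : Fin m, ∃ r ∈ R, u ∈ Ts r) :
    (R.image fun r => (Sum.inr r : CoverElem m k d)).card ≤ k ∧
    (∀ i : Fin m,
      1 / ((k : ℝ) * m)
        ≤ linReward m k d Ts i (R.image fun r => (Sum.inr r : CoverElem m k d))) ∧
    1 / ((k : ℝ) * m)
      ≤ ⨆ S' : {S' : Finset (CoverElem m k d) // S'.card ≤ k},
          ⨅ i : Fin m, linReward m k d Ts i S' := by
  have hcard : (R.image fun r => (Sum.inr r : CoverElem m k d)).card ≤ k :=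
    le_trans (card_image_le) hRcard
  have hrew : ∀ i : Fin m,
      1 / ((k : ℝ) * m)
        ≤ linReward m k d Ts i (R.image fun r => (Sum.inr r : CoverElem m k d)) := by
    intro i
    obtain ⟨r, hrR, hiT⟩ := hcover i
    have hmem : (Sum.inr r : CoverElem m k d) ∈ R.image fun r => (Sum.inr r : CoverElem m k d) :=
      mem_image_of_mem _ hrR
    calc 1 / ((k : ℝ) * m) = rewardCoeff m k d Ts i (Sum.inr r) := by
          simp [rewardCoeff, hiT]
      _ ≤ _ := Finset.single_le_sum (fun e _ => rewardCoeff_nonneg m k d Ts i e) hmem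
  refine ⟨hcard, hrew, ?_⟩
  have hbdd : BddAbove (Set.range fun S' : {S' : Finset (CoverElem m k d) // S'.card ≤ k} =>
      ⨅ i : Fin m, linReward m k d Ts i S') := by
    refine ⟨∑ e : CoverElem m k d, rewardCoeff m k d Ts ⟨0, hm⟩ e, ?_⟩
    rintro x ⟨S', rfl⟩
    refine le_trans (ciInf_le (by
      refine ⟨0, ?_⟩
      rintro y ⟨i', rfl⟩
      exact Finset.sum_nonneg fun e _ => rewardCoeff_nonneg m k d Ts i' e) (⟨0, hm⟩ : Fin m)) ?_
    exact Finset.sum_le_sum_of_subset_of_nonneg (Finset.subset_univ _)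
      (fun e _ _ => rewardCoeff_nonneg m k d Ts _ e)
  haveI : Nonempty (Fin m) := ⟨⟨0, hm⟩⟩
  refine le_trans ?_ (le_ciSup hbdd ⟨R.image fun r => (Sum.inr r : CoverElem m k d), hcard⟩)
  exact le_ciInf fun i => hrew i
end
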